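/- Let 𝒫 be a configuration of n points in general position in the plane, and let P, Q, R be three pairwise distinct points of 𝒫. If n(P,Q) ≡ n(Q,R) (mod 2), then n(P,R) ≡ n−1 (mod 2). -/

import Mathlib

open scoped Classical

noncomputable section

/-- The set Pts is in general position: no three distinct points are collinear. -/
def GenPos (Pts : Finset (ℝ × ℝ)) : Prop :=
  ∀ A ∈ Pts, ∀ B ∈ Pts, ∀ C ∈ Pts, A ≠ B → A ≠ C → B ≠ C →
    ¬ Collinear ℝ ({A, B, C} : Set (ℝ × ℝ))

/-- `sepCount Pts P Q` is the number of unordered pairs `{R, S}` of points of `Pts \ {P, Q}`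
such that the line through `R` and `S` strictly separates `P` and `Q`. -/
def sepCount (Pts : Finset (ℝ × ℝ)) (P Q : ℝ × ℝ) : ℕ :=
  ((Finset.powersetCard 2 (Pts \ {P, Q})).filter
    (fun s => (affineSpan ℝ (↑s : Set (ℝ × ℝ))).SOppSide P Q)).card

/-- The vertices of the convex hull of `Pts` (its extreme points). -/
def hullVertices (Pts : Finset (ℝ × ℝ)) : Set (ℝ × ℝ) :=
  Set.extremePoints ℝ (convexHull ℝ (↑Pts : Set (ℝ × ℝ)))

/-- `Q : ZMod k → ℝ × ℝ` lists the points of `S` in convex position, in cyclic order: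
`Q` is an injective enumeration of `S` and, for every `i`, all points of `S` other than
`Q i` and `Q (i+1)` lie strictly on the same side of the line through `Q i` and `Q (i+1)`
(i.e. each consecutive pair spans an edge of the convex hull of `S`). -/
def IsConvexCycle (k : ℕ) (S : Set (ℝ × ℝ)) (Q : ZMod k → ℝ × ℝ) : Prop :=
  Function.Injective Q ∧ Set.range Q = S ∧
    ∀ i : ZMod k, ∀ x ∈ S, ∀ y ∈ S,
      x ∉ ({Q i, Q (i + 1)} : Set (ℝ × ℝ)) → y ∉ ({Q i, Q (i + 1)} : Set (ℝ × ℝ)) →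
        (affineSpan ℝ ({Q i, Q (i + 1)} : Set (ℝ × ℝ))).SSameSide x y

/-!
Let `T` be the configuration without `P`, `Q`, `R`. A line through two points of `T` separates
an even number of the pairs `PQ`, `QR`, `PR`, since each of `P`, `Q`, `R` lies on one of its two
sides. For `S ∈ T`, an odd number of the three lines `RS`, `PS`, `QS` separate the two remaining
vertices of the triangle `PQR` (all three if `S` lies inside it, exactly one otherwise). These are
all the lines counted by `n(P,Q) + n(Q,R) + n(P,R)`, which is therefore `≡ |T| = n - 3 (mod 2)`.
Sides of a line are read off from the sign of an orientation determinant.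
-/

open Finset

/-- Twice the signed area of the triangle `ABC`. -/
def orient (A B C : ℝ × ℝ) : ℝ := (B.1 - A.1) * (C.2 - A.2) - (B.2 - A.2) * (C.1 - A.1)

lemma orient_lineMap (A B x y : ℝ × ℝ) (t : ℝ) :
    orient A B (AffineMap.lineMap x y t) = (1 - t) * orient A B x + t * orient A B y := by
  simp only [orient, AffineMap.lineMap_apply_module, Prod.fst_add, Prod.snd_add, Prod.smul_fst,
    Prod.smul_snd, smul_eq_mul]
  ring

lemma mem_affineSpan_pair_iff_orient_eq_zero {A B x : ℝ × ℝ} (hAB : A ≠ B) :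
    x ∈ line[ℝ, A, B] ↔ orient A B x = 0 := by
  rw [mem_affineSpan_pair_iff_exists_lineMap_eq]
  constructor
  · rintro ⟨t, rfl⟩
    rw [orient_lineMap]
    simp only [orient]
    ring
  · intro h
    simp only [orient] at h
    rcases ne_or_eq A.1 B.1 with h1 | h1
    · refine ⟨(x.1 - A.1) / (B.1 - A.1), ?_⟩
      have : B.1 - A.1 ≠ 0 := sub_ne_zero.2 h1.symm
      ext <;> simp only [AffineMap.lineMap_apply_module, Prod.fst_add, Prod.snd_add,
        Prod.smul_fst, Prod.smul_snd, smul_eq_mul] <;> field_simp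
      · ring
      · linear_combination -h
    · have : B.2 - A.2 ≠ 0 := fun h2 => hAB (Prod.ext h1 (sub_eq_zero.1 h2).symm)
      refine ⟨(x.2 - A.2) / (B.2 - A.2), ?_⟩
      ext <;> simp only [AffineMap.lineMap_apply_module, Prod.fst_add, Prod.snd_add,
        Prod.smul_fst, Prod.smul_snd, smul_eq_mul] <;> field_simp
      · linear_combination h
      · ring

lemma collinear_of_orient_eq_zero {A B C : ℝ × ℝ} (h : orient A B C = 0) :
    Collinear ℝ ({A, B, C} : Set (ℝ × ℝ)) := by
  rcases eq_or_ne A B with rfl | hAB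
  · simpa using collinear_pair ℝ A C
  · rw [Set.pair_comm, Set.insert_comm]
    exact collinear_insert_of_mem_affineSpan_pair
      ((mem_affineSpan_pair_iff_orient_eq_zero hAB).2 h)

lemma mul_neg_iff_exists_mem_Icc {a b : ℝ} (ha : a ≠ 0) (hb : b ≠ 0) :
    a * b < 0 ↔ ∃ t ∈ Set.Icc (0 : ℝ) 1, (1 - t) * a + t * b = 0 := by
  constructor
  · intro h
    have hab : a - b ≠ 0 := by
      intro h'; rw [sub_eq_zero.1 h'] at h; nlinarith [mul_self_nonneg b]
    refine ⟨a / (a - b), ⟨?_, ?_⟩, by field_simp; ring⟩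
    · rcases mul_neg_iff.1 h with ⟨h1, h2⟩ | ⟨h1, h2⟩
      · exact div_nonneg h1.le (by linarith)
      · exact div_nonneg_of_nonpos h1.le (by linarith)
    · rcases mul_neg_iff.1 h with ⟨h1, h2⟩ | ⟨h1, h2⟩
      · rw [div_le_one (by linarith)]; linarith
      · rw [div_le_one_of_neg (by linarith)]; linarith
  · rintro ⟨t, ⟨ht0, ht1⟩, h⟩
    by_contra! hab
    have htb : t * b ^ 2 ≤ 0 := by
      rw [show t * b ^ 2 = -((1 - t) * (a * b)) by linear_combination b * h]
      exact neg_nonpos.2 (mul_nonneg (by linarith) hab)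
    have ht : t = 0 := le_antisymm (by nlinarith [sq_pos_of_ne_zero hb]) ht0
    simp [ht, ha] at h

lemma sOppSide_affineSpan_pair_iff {A B x y : ℝ × ℝ} (hAB : A ≠ B) :
    line[ℝ, A, B].SOppSide x y ↔ orient A B x * orient A B y < 0 := by
  simp only [AffineSubspace.SOppSide, AffineSubspace.wOppSide_iff_exists_wbtw,
    mem_affineSpan_pair_iff_orient_eq_zero hAB]
  constructor
  · rintro ⟨⟨p, hp, t, ht, rfl⟩, hx, hy⟩
    rw [orient_lineMap] at hp
    exact (mul_neg_iff_exists_mem_Icc hx hy).2 ⟨t, ht, hp⟩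
  · intro h
    have hx : orient A B x ≠ 0 := by rintro h0; simp [h0] at h
    have hy : orient A B y ≠ 0 := by rintro h0; simp [h0] at h
    obtain ⟨t, ht, h0⟩ := (mul_neg_iff_exists_mem_Icc hx hy).1 h
    exact ⟨⟨AffineMap.lineMap x y t, by rwa [orient_lineMap], t, ht, rfl⟩, hx, hy⟩

lemma ite_mul_neg_eq_add {a b : ℝ} (ha : a ≠ 0) (hb : b ≠ 0) :
    (if a * b < 0 then 1 else 0 : ZMod 2) =
      (if a < 0 then 1 else 0) + (if b < 0 then 1 else 0) := by
  rcases ha.lt_or_gt with ha | ha <;> rcases hb.lt_or_gt with hb | hb <;>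
    simp [mul_neg_iff, ha, hb, ha.not_gt, hb.not_gt, CharTwo.add_self_eq_zero]

lemma ite_neg_neg_eq_add_one {a : ℝ} (ha : a ≠ 0) :
    (if -a < 0 then 1 else 0 : ZMod 2) = (if a < 0 then 1 else 0) + 1 := by
  rcases ha.lt_or_gt with ha | ha <;> simp [ha, ha.not_gt, CharTwo.add_self_eq_zero]

lemma line_sOppSide_parity_eq_zero {X Y P Q R : ℝ × ℝ} (hP : orient X Y P ≠ 0)
    (hQ : orient X Y Q ≠ 0) (hR : orient X Y R ≠ 0) :
    (if line[ℝ, X, Y].SOppSide P Q then 1 else 0 : ZMod 2) +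
      (if line[ℝ, X, Y].SOppSide Q R then 1 else 0) +
      (if line[ℝ, X, Y].SOppSide P R then 1 else 0) = 0 := by
  have hXY : X ≠ Y := by rintro rfl; simp [orient] at hP
  simp only [sOppSide_affineSpan_pair_iff hXY, ite_mul_neg_eq_add hP hQ,
    ite_mul_neg_eq_add hQ hR, ite_mul_neg_eq_add hP hR]
  grind

lemma cevian_sOppSide_parity_eq_one {S P Q R : ℝ × ℝ} (hPQ : orient S P Q ≠ 0)
    (hQR : orient S Q R ≠ 0) (hRP : orient S R P ≠ 0) :
    (if line[ℝ, R, S].SOppSide P Q then 1 else 0 : ZMod 2) +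
      (if line[ℝ, P, S].SOppSide Q R then 1 else 0) +
      (if line[ℝ, Q, S].SOppSide P R then 1 else 0) = 1 := by
  have hRS : R ≠ S := by rintro rfl; simp [orient] at hRP
  have hPS : P ≠ S := by rintro rfl; simp [orient] at hPQ
  have hQS : Q ≠ S := by rintro rfl; simp [orient] at hQR
  rw [sOppSide_affineSpan_pair_iff hRS, sOppSide_affineSpan_pair_iff hPS,
    sOppSide_affineSpan_pair_iff hQS,
    show orient R S P * orient R S Q = orient S R P * -orient S Q R by simp only [orient]; ring,
    show orient P S Q * orient P S R = -orient S P Q * orient S R P by simp only [orient]; ring,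
    show orient Q S P * orient Q S R = orient S P Q * -orient S Q R by simp only [orient]; ring,
    ite_mul_neg_eq_add hRP (neg_ne_zero.2 hQR), ite_mul_neg_eq_add (neg_ne_zero.2 hPQ) hRP,
    ite_mul_neg_eq_add hPQ (neg_ne_zero.2 hQR), ite_neg_neg_eq_add_one hPQ,
    ite_neg_neg_eq_add_one hQR]
  grind

lemma card_filter_powersetCard_two_insert {α : Type*} [DecidableEq α] {U : Finset α} {C : α}
    (hC : C ∉ U) (p : Finset α → Prop) [DecidablePred p] :
    #{s ∈ powersetCard 2 (insert C U) | p s} =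
      #{s ∈ powersetCard 2 U | p s} + #{x ∈ U | p {C, x}} := by
  rw [powersetCard_succ_insert hC, filter_union, card_union_of_disjoint, powersetCard_one,
    map_eq_image, image_image, filter_image, card_image_of_injOn]
  · rfl
  · intro x hx y _ hxy
    have hxU : x ∈ U := (mem_filter.1 hx).1
    have : x ∈ ({C, y} : Finset α) := by
      simp only [Function.comp_apply, Function.Embedding.coeFn_mk] at hxy
      rw [← hxy]
      simp
    simp only [mem_insert, mem_singleton] at this
    exact this.resolve_left (by rintro rfl; exact hC hxU)
  · refine disjoint_left.2 fun s hs hs' => ?_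
    obtain ⟨t, -, rfl⟩ := mem_image.1 (mem_filter.1 hs').1
    exact hC ((mem_powersetCard.1 (mem_filter.1 hs).1).1 (mem_insert_self C t))

lemma natCast_card_filter_add_add {α R : Type*} [Semiring R] (F : Finset α) (p q r : α → Prop)
    [DecidablePred p] [DecidablePred q] [DecidablePred r] {c : R}
    (h : ∀ x ∈ F,
      (if p x then 1 else 0 : R) + (if q x then 1 else 0) + (if r x then 1 else 0) = c) :
    ((#{x ∈ F | p x} + #{x ∈ F | q x} + #{x ∈ F | r x} : ℕ) : R) = #F * c := by
  simp only [card_filter, Nat.cast_add, Nat.cast_sum, Nat.cast_ite, Nat.cast_one, Nat.cast_zero,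
    ← sum_add_distrib, sum_congr rfl h, sum_const, nsmul_eq_mul]

/-- `sepCount` elaborates to a filter over the image of `powersetCard 2 _` in
`Finset (Set (ℝ × ℝ))`. -/
lemma sepCount_eq_card_filter (Pts : Finset (ℝ × ℝ)) (P Q : ℝ × ℝ) :
    sepCount Pts P Q =
      #((powersetCard 2 (Pts \ {P, Q})).filter fun s : Finset (ℝ × ℝ) =>
        (affineSpan ℝ (s : Set (ℝ × ℝ))).SOppSide P Q) := by
  rw [sepCount, show ∀ F : Finset (Finset (ℝ × ℝ)), (F >>= fun s => pure (s : Set (ℝ × ℝ))) =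
      F.image (↑) from fun F => sup_singleton_apply _ _, filter_image,
    card_image_of_injective _ coe_injective]

lemma sepCount_eq_add {Pts : Finset (ℝ × ℝ)} {X Y C : ℝ × ℝ} (hC : C ∈ Pts) (hCX : C ≠ X)
    (hCY : C ≠ Y) :
    sepCount Pts X Y =
      #((powersetCard 2 (Pts \ {X, Y, C})).filter fun s : Finset (ℝ × ℝ) =>
        (affineSpan ℝ (s : Set (ℝ × ℝ))).SOppSide X Y) +
        #{S ∈ Pts \ {X, Y, C} | line[ℝ, C, S].SOppSide X Y} := by
  have hsplit : Pts \ {X, Y} = insert C (Pts \ {X, Y, C}) := by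
    ext x
    by_cases hx : x = C <;> simp [hx, hC, hCX, hCY]
  rw [sepCount_eq_card_filter, hsplit, card_filter_powersetCard_two_insert (by simp)]
  simp only [coe_pair]

lemma GenPos.orient_ne_zero {Pts : Finset (ℝ × ℝ)} (hgen : GenPos Pts) {A B C : ℝ × ℝ}
    (hA : A ∈ Pts) (hB : B ∈ Pts) (hC : C ∈ Pts) (hAB : A ≠ B) (hAC : A ≠ C) (hBC : B ≠ C) :
    orient A B C ≠ 0 :=
  fun h => hgen A hA B hB C hC hAB hAC hBC (collinear_of_orient_eq_zero h)

lemma sepCount_add_sepCount_add_sepCount_modEq {Pts : Finset (ℝ × ℝ)} (hgen : GenPos Pts)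
    {P Q R : ℝ × ℝ} (hP : P ∈ Pts) (hQ : Q ∈ Pts) (hR : R ∈ Pts) (hPQ : P ≠ Q) (hPR : P ≠ R)
    (hQR : Q ≠ R) :
    sepCount Pts P Q + sepCount Pts Q R + sepCount Pts P R ≡ #(Pts \ {P, Q, R}) [MOD 2] := by
  rw [← ZMod.natCast_eq_natCast_iff]
  set T := Pts \ {P, Q, R} with hT
  have hmemT : ∀ {x}, x ∈ T → x ∈ Pts ∧ x ≠ P ∧ x ≠ Q ∧ x ≠ R := by
    intro x hx; simpa [hT] using hx
  have hpairs := natCast_card_filter_add_add (R := ZMod 2) (powersetCard 2 T)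
    (fun s : Finset (ℝ × ℝ) => (affineSpan ℝ (s : Set (ℝ × ℝ))).SOppSide P Q)
    (fun s : Finset (ℝ × ℝ) => (affineSpan ℝ (s : Set (ℝ × ℝ))).SOppSide Q R)
    (fun s : Finset (ℝ × ℝ) => (affineSpan ℝ (s : Set (ℝ × ℝ))).SOppSide P R) (c := 0) <| by
    intro s hs
    obtain ⟨hsub, hcard⟩ := mem_powersetCard.1 hs
    obtain ⟨X, Y, hXY, rfl⟩ := card_eq_two.1 hcard
    obtain ⟨hX, hXP, hXQ, hXR⟩ := hmemT (hsub (mem_insert_self X {Y}))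
    obtain ⟨hY, hYP, hYQ, hYR⟩ := hmemT (hsub (mem_insert_of_mem (mem_singleton_self Y)))
    rw [coe_pair]
    exact line_sOppSide_parity_eq_zero (hgen.orient_ne_zero hX hY hP hXY hXP hYP)
      (hgen.orient_ne_zero hX hY hQ hXY hXQ hYQ) (hgen.orient_ne_zero hX hY hR hXY hXR hYR)
  have hcevians := natCast_card_filter_add_add (R := ZMod 2) T
    (fun S => line[ℝ, R, S].SOppSide P Q) (fun S => line[ℝ, P, S].SOppSide Q R)
    (fun S => line[ℝ, Q, S].SOppSide P R) (c := 1) <| by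
    intro S hS
    obtain ⟨hS, hSP, hSQ, hSR⟩ := hmemT hS
    exact cevian_sOppSide_parity_eq_one (hgen.orient_ne_zero hS hP hQ hSP hSQ hPQ)
      (hgen.orient_ne_zero hS hQ hR hSQ hSR hQR) (hgen.orient_ne_zero hS hR hP hSR hSP hPR.symm)
  rw [sepCount_eq_add hR hPR.symm hQR.symm, sepCount_eq_add hP hPQ hPR,
    sepCount_eq_add hQ hPQ.symm hQR, pair_comm R P, insert_comm Q P, pair_comm R Q, ← hT]
  push_cast at hpairs hcevians ⊢
  linear_combination hpairs + hcevians

/-- If `n(P,Q) ≡ n(Q,R) (mod 2)` for three pairwise distinct points `P`, `Q`, `R` of a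
configuration of `n` points in general position, then `n(P,R) ≡ n - 1 (mod 2)`. -/
theorem sepCount_modeq_of_modeq (n : ℕ) (Pts : Finset (ℝ × ℝ))
    (hgen : GenPos Pts) (hcard : Pts.card = n)
    (P Q R : ℝ × ℝ) (hP : P ∈ Pts) (hQ : Q ∈ Pts) (hR : R ∈ Pts)
    (hPQ : P ≠ Q) (hPR : P ≠ R) (hQR : Q ≠ R)
    (h : sepCount Pts P Q ≡ sepCount Pts Q R [MOD 2]) :
    sepCount Pts P R ≡ n - 1 [MOD 2] := by
  have hsum := sepCount_add_sepCount_add_sepCount_modEq hgen hP hQ hR hPQ hPR hQR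
  have hsub : ({P, Q, R} : Finset (ℝ × ℝ)) ⊆ Pts := by simp [insert_subset_iff, hP, hQ, hR]
  have hcard3 : #({P, Q, R} : Finset (ℝ × ℝ)) = 3 := card_eq_three.2 ⟨P, Q, R, hPQ, hPR, hQR, rfl⟩
  have hT : #(Pts \ {P, Q, R}) + 3 = n := by
    rw [card_sdiff_of_subset hsub, hcard3, ← hcard]
    have := card_le_card hsub
    omega
  unfold Nat.ModEq at *
  omega

end
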